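/- Let v ∈ W = S_{n₁} × S_{n₂} and v̂, ŵ ∈ S_N. Assume that ρ restricts to a bijection from the set ŵ·Φ̂⁻ ∩ v̂⁻¹·Φ̂⁻ onto the set Φ⁻ ∩ v⁻¹·Φ⁺. Then the following identity holds in L: v⁻¹·( Σ_{α ∈ Φ⁻ ∩ v·Φ⁻} α ) + ρ( v̂⁻¹·( Σ_{α̂ ∈ Φ̂⁻ ∩ v̂ŵ·Φ̂⁻} α̂ ) ) = Σ_{α ∈ Φ⁻} α. (This is the computation showing that, in this situation, covering pairs are automatically well-covering, Lemma 3.12 of the paper.) -/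
import Mathlib


open Equiv

/-- The weight lattice `L = ℤ^{n₁} × ℤ^{n₂}` of `GL(n₁) × GL(n₂)`. -/
abbrev L (n₁ n₂ : ℕ) : Type := (Fin n₁ → ℤ) × (Fin n₂ → ℤ)

/-- The weight lattice `L̂ = ℤ^N` of `GL(N)`. -/
abbrev Lhat (N : ℕ) : Type := Fin N → ℤ

/-- The standard basis vector `ε_a` of the first factor of `L`. -/
def eps {n₁ n₂ : ℕ} (a : Fin n₁) : L n₁ n₂ := (Pi.single a 1, 0)

/-- The standard basis vector `η_c` of the second factor of `L`. -/
def eta {n₁ n₂ : ℕ} (c : Fin n₂) : L n₁ n₂ := (0, Pi.single c 1)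

/-- The standard basis vector `ε̂_p` of `L̂`. -/
def epsHat {N : ℕ} (p : Fin N) : Lhat N := Pi.single p 1

/-- The lexicographic identification of `{1,…,n₁} × {1,…,n₂}` with `{1,…,n₁n₂}`,
`(i,j) ↦ (i-1)n₂ + j` in 1-based terms. -/
def lex {n₁ n₂ : ℕ} (i : Fin n₁) (j : Fin n₂) : Fin (n₁ * n₂) :=
  finProdFinEquiv (i, j)

/-- The action of `W = S_{n₁} × S_{n₂}` on `L`, characterised by
`u • ε_a = ε_{u₁ a}` and `u • η_c = η_{u₂ c}`. -/
def wAct {n₁ n₂ : ℕ} (u : Perm (Fin n₁) × Perm (Fin n₂)) (x : L n₁ n₂) : L n₁ n₂ :=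
  (x.1 ∘ u.1.symm, x.2 ∘ u.2.symm)

/-- The action of `Ŵ = S_N` on `L̂`, characterised by `û • ε̂_p = ε̂_{û p}`. -/
def hatAct {N : ℕ} (u : Perm (Fin N)) (x : Lhat N) : Lhat N := x ∘ u.symm

/-- The positive roots `Φ⁺` of `GL(n₁) × GL(n₂)`. -/
def PhiPos (n₁ n₂ : ℕ) : Set (L n₁ n₂) :=
  {x | ∃ a b : Fin n₁, a < b ∧ x = eps a - eps b} ∪
    {x | ∃ c d : Fin n₂, c < d ∧ x = eta c - eta d}

/-- The negative roots `Φ⁻ = -Φ⁺`. -/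
def PhiNeg (n₁ n₂ : ℕ) : Set (L n₁ n₂) := Neg.neg '' PhiPos n₁ n₂

/-- The inversion set `Φ(u) = Φ⁻ ∩ u · Φ⁺`. -/
def Phi {n₁ n₂ : ℕ} (u : Perm (Fin n₁) × Perm (Fin n₂)) : Set (L n₁ n₂) :=
  PhiNeg n₁ n₂ ∩ wAct u '' PhiPos n₁ n₂

/-- The positive roots `Φ̂⁺` of `GL(N)`. -/
def PhiHatPos (N : ℕ) : Set (Lhat N) :=
  {x | ∃ p q : Fin N, p < q ∧ x = epsHat p - epsHat q}

/-- The negative roots `Φ̂⁻ = -Φ̂⁺`. -/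
def PhiHatNeg (N : ℕ) : Set (Lhat N) := Neg.neg '' PhiHatPos N

/-- The inversion set `Φ̂(û) = Φ̂⁻ ∩ û · Φ̂⁺`. -/
def PhiHat {N : ℕ} (u : Perm (Fin N)) : Set (Lhat N) :=
  PhiHatNeg N ∩ hatAct u '' PhiHatPos N

/-- The longest element `ŵ₀ : k ↦ N + 1 - k` of `S_N`. -/
def w0 (N : ℕ) : Perm (Fin N) := Fin.revPerm

/-- The 3-cycle `(a b c)` sending `a ↦ b ↦ c ↦ a` (permutations composed right-to-left). -/
def cyc {α : Type*} [DecidableEq α] (a b c : α) : Perm α :=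
  Equiv.swap a b * Equiv.swap b c

section helpers
variable {n₁ n₂ : ℕ}

lemma wAct_mul (u w : Perm (Fin n₁) × Perm (Fin n₂)) (x : L n₁ n₂) :
    wAct (u * w) x = wAct u (wAct w x) := rfl

lemma wAct_one (x : L n₁ n₂) : wAct 1 x = x := rfl

def wActHom (u : Perm (Fin n₁) × Perm (Fin n₂)) : L n₁ n₂ →+ L n₁ n₂ :=
  AddMonoidHom.mk' (wAct u) (fun _ _ => rfl)

lemma wAct_leftInv (u : Perm (Fin n₁) × Perm (Fin n₂)) (x : L n₁ n₂) :
    wAct u⁻¹ (wAct u x) = x := by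
  rw [← wAct_mul, inv_mul_cancel, wAct_one]

lemma wAct_injective (u : Perm (Fin n₁) × Perm (Fin n₂)) :
    Function.Injective (wAct u : L n₁ n₂ → L n₁ n₂) :=
  Function.LeftInverse.injective (wAct_leftInv u)

def hatActHom {N : ℕ} (u : Perm (Fin N)) : Lhat N →+ Lhat N :=
  AddMonoidHom.mk' (hatAct u) (fun _ _ => rfl)

lemma hatAct_mul {N : ℕ} (u w : Perm (Fin N)) (x : Lhat N) :
    hatAct (u * w) x = hatAct u (hatAct w x) := rfl

lemma hatAct_leftInv {N : ℕ} (u : Perm (Fin N)) (x : Lhat N) :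
    hatAct u⁻¹ (hatAct u x) = x := by
  rw [← hatAct_mul, inv_mul_cancel]; rfl

lemma hatAct_injective {N : ℕ} (u : Perm (Fin N)) :
    Function.Injective (hatAct u : Lhat N → Lhat N) :=
  Function.LeftInverse.injective (hatAct_leftInv u)

lemma wAct_eps (u : Perm (Fin n₁) × Perm (Fin n₂)) (a : Fin n₁) :
    wAct u (eps a : L n₁ n₂) = eps (u.1 a) := by
  refine Prod.ext ?_ rfl
  funext x
  simp [wAct, eps, Pi.single_apply, Equiv.symm_apply_eq]

lemma wAct_eta (u : Perm (Fin n₁) × Perm (Fin n₂)) (c : Fin n₂) :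
    wAct u (eta c : L n₁ n₂) = eta (u.2 c) := by
  refine Prod.ext rfl ?_
  funext x
  simp [wAct, eta, Pi.single_apply, Equiv.symm_apply_eq]

def hgt (x : L n₁ n₂) : ℤ := (∑ i : Fin n₁, (i : ℤ) * x.1 i) + ∑ j : Fin n₂, (j : ℤ) * x.2 j

lemma hgt_eps_sub (a b : Fin n₁) : hgt (eps a - eps b : L n₁ n₂) = (a : ℤ) - b := by
  simp [hgt, eps, Pi.single_apply, mul_sub, mul_ite, Finset.sum_sub_distrib]

lemma hgt_eta_sub (c d : Fin n₂) : hgt (eta c - eta d : L n₁ n₂) = (c : ℤ) - d := by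
  simp [hgt, eta, Pi.single_apply, mul_sub, mul_ite, Finset.sum_sub_distrib]

lemma hgt_neg (x : L n₁ n₂) : hgt (-x) = -hgt x := by
  simp [hgt, Finset.sum_add_distrib, ← Finset.sum_neg_distrib]
  ring

lemma hgt_pos_lt {x : L n₁ n₂} (hx : x ∈ PhiPos n₁ n₂) : hgt x < 0 := by
  rcases hx with ⟨a, b, hab, rfl⟩ | ⟨c, d, hcd, rfl⟩
  · rw [hgt_eps_sub]
    have : (a : ℕ) < b := hab
    omega
  · rw [hgt_eta_sub]
    have : (c : ℕ) < d := hcd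
    omega

lemma pos_not_neg {x : L n₁ n₂} (hx : x ∈ PhiPos n₁ n₂) : x ∉ PhiNeg n₁ n₂ := by
  rintro ⟨y, hy, rfl⟩
  have h1 := hgt_pos_lt hy
  have h2 := hgt_pos_lt hx
  rw [hgt_neg] at h2
  omega

end helpers

section more
variable {n₁ n₂ : ℕ}

lemma wAct_sub (u : Perm (Fin n₁) × Perm (Fin n₂)) (x y : L n₁ n₂) :
    wAct u (x - y) = wAct u x - wAct u y := (wActHom u).map_sub x y

lemma wAct_neg (u : Perm (Fin n₁) × Perm (Fin n₂)) (x : L n₁ n₂) :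
    wAct u (-x) = -(wAct u x) := (wActHom u).map_neg x

lemma neg_mem_roots {x : L n₁ n₂} (hx : x ∈ PhiPos n₁ n₂ ∪ PhiNeg n₁ n₂) :
    -x ∈ PhiPos n₁ n₂ ∪ PhiNeg n₁ n₂ := by
  rcases hx with hx | ⟨y, hy, rfl⟩
  · exact Or.inr ⟨x, hx, rfl⟩
  · rw [neg_neg]; exact Or.inl hy

lemma eps_sub_mem {a b : Fin n₁} (hab : a ≠ b) :
    (eps a - eps b : L n₁ n₂) ∈ PhiPos n₁ n₂ ∪ PhiNeg n₁ n₂ := by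
  rcases lt_or_gt_of_ne hab with hlt | hgt
  · exact Or.inl (Or.inl ⟨a, b, hlt, rfl⟩)
  · exact Or.inr ⟨eps b - eps a, Or.inl ⟨b, a, hgt, rfl⟩, by abel⟩

lemma eta_sub_mem {c d : Fin n₂} (hcd : c ≠ d) :
    (eta c - eta d : L n₁ n₂) ∈ PhiPos n₁ n₂ ∪ PhiNeg n₁ n₂ := by
  rcases lt_or_gt_of_ne hcd with hlt | hgt
  · exact Or.inl (Or.inr ⟨c, d, hlt, rfl⟩)
  · exact Or.inr ⟨eta d - eta c, Or.inr ⟨d, c, hgt, rfl⟩, by abel⟩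

lemma wAct_root (u : Perm (Fin n₁) × Perm (Fin n₂)) {x : L n₁ n₂}
    (hx : x ∈ PhiPos n₁ n₂ ∪ PhiNeg n₁ n₂) :
    wAct u x ∈ PhiPos n₁ n₂ ∪ PhiNeg n₁ n₂ := by
  have key : ∀ y ∈ PhiPos n₁ n₂, wAct u y ∈ PhiPos n₁ n₂ ∪ PhiNeg n₁ n₂ := by
    rintro y (⟨a, b, hab, rfl⟩ | ⟨c, d, hcd, rfl⟩)
    · rw [show wAct u (eps a - eps b) = eps (u.1 a) - eps (u.1 b) by
        rw [wAct_sub, wAct_eps, wAct_eps]]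
      exact eps_sub_mem (fun hc => hab.ne (u.1.injective hc))
    · rw [show wAct u (eta c - eta d) = eta (u.2 c) - eta (u.2 d) by
        rw [wAct_sub, wAct_eta, wAct_eta]]
      exact eta_sub_mem (fun hc => hcd.ne (u.2.injective hc))
  rcases hx with hx | ⟨y, hy, rfl⟩
  · exact key x hx
  · rw [show wAct u (-y) = -(wAct u y) from wAct_neg u y]
    exact neg_mem_roots (key y hy)

lemma phiPos_finite : (PhiPos n₁ n₂).Finite := by
  apply Set.Finite.subset
    ((Set.finite_range (fun p : Fin n₁ × Fin n₁ => (eps p.1 - eps p.2 : L n₁ n₂))).union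
      (Set.finite_range (fun p : Fin n₂ × Fin n₂ => (eta p.1 - eta p.2 : L n₁ n₂))))
  rintro x (⟨a, b, _, rfl⟩ | ⟨c, d, _, rfl⟩)
  · exact Or.inl ⟨(a, b), rfl⟩
  · exact Or.inr ⟨(c, d), rfl⟩

lemma phiHatPos_finite {N : ℕ} : (PhiHatPos N).Finite := by
  apply Set.Finite.subset
    (Set.finite_range (fun p : Fin N × Fin N => (epsHat p.1 - epsHat p.2 : Lhat N)))
  rintro x ⟨p, q, _, rfl⟩
  exact ⟨(p, q), rfl⟩

lemma map_finsum_mem_id {M M' : Type*} [AddCommGroup M] [AddCommGroup M'] (g : M →+ M')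
    {S : Set M} (hS : S.Finite) (hinj : Set.InjOn g S) :
    (∑ᶠ y ∈ g '' S, y) = g (∑ᶠ x ∈ S, x) := by
  rw [finsum_mem_image hinj, ← hS.coe_toFinset, finsum_mem_coe_finset, finsum_mem_coe_finset,
    map_sum]

end more


/-- if `ρ` restricts to a bijection from `ŵ·Φ̂⁻ ∩ v̂⁻¹·Φ̂⁻` onto
`Φ⁻ ∩ v⁻¹·Φ⁺`, then
`v⁻¹·(Σ_{α ∈ Φ⁻ ∩ vΦ⁻} α) + ρ(v̂⁻¹·(Σ_{α̂ ∈ Φ̂⁻ ∩ v̂ŵΦ̂⁻} α̂)) = Σ_{α ∈ Φ⁻} α`. -/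
theorem covering_implies_well_covering_identity (n₁ n₂ : ℕ) (hn₁ : 0 < n₁) (hn₂ : 0 < n₂)
    (ρ : Lhat (n₁ * n₂) →ₗ[ℤ] L n₁ n₂)
    (hρ : ∀ (i : Fin n₁) (j : Fin n₂), ρ (epsHat (lex i j)) = eps i + eta j)
    (v : Perm (Fin n₁) × Perm (Fin n₂)) (vh wh : Perm (Fin (n₁ * n₂)))
    (h : Set.BijOn (⇑ρ)
      (hatAct wh '' PhiHatNeg (n₁ * n₂) ∩ hatAct vh⁻¹ '' PhiHatNeg (n₁ * n₂))
      (PhiNeg n₁ n₂ ∩ wAct v⁻¹ '' PhiPos n₁ n₂)) :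
    wAct v⁻¹ (∑ᶠ α ∈ PhiNeg n₁ n₂ ∩ wAct v '' PhiNeg n₁ n₂, α) +
      ρ (hatAct vh⁻¹
        (∑ᶠ αh ∈ PhiHatNeg (n₁ * n₂) ∩ hatAct (vh * wh) '' PhiHatNeg (n₁ * n₂), αh)) =
      ∑ᶠ α ∈ PhiNeg n₁ n₂, α := by
  have hPf : (PhiPos n₁ n₂).Finite := phiPos_finite
  have hNf : (PhiNeg n₁ n₂).Finite := hPf.image _
  have hHf : (PhiHatNeg (n₁ * n₂)).Finite := phiHatPos_finite.image _
  -- First summand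
  have hset1 : wAct v⁻¹ '' (PhiNeg n₁ n₂ ∩ wAct v '' PhiNeg n₁ n₂) =
      PhiNeg n₁ n₂ ∩ wAct v⁻¹ '' PhiNeg n₁ n₂ := by
    rw [Set.image_inter (wAct_injective v⁻¹), Set.image_image]
    simp only [wAct_leftInv, Set.image_id']
    exact Set.inter_comm _ _
  have e1 : wAct v⁻¹ (∑ᶠ α ∈ PhiNeg n₁ n₂ ∩ wAct v '' PhiNeg n₁ n₂, α) =
      ∑ᶠ α ∈ PhiNeg n₁ n₂ ∩ wAct v⁻¹ '' PhiNeg n₁ n₂, α := by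
    rw [show (wAct v⁻¹ : L n₁ n₂ → L n₁ n₂) = ⇑(wActHom v⁻¹) from rfl,
      ← map_finsum_mem_id (wActHom v⁻¹) (hNf.inter_of_left _) ((wAct_injective v⁻¹).injOn),
      show ⇑(wActHom v⁻¹) = (wAct v⁻¹ : L n₁ n₂ → L n₁ n₂) from rfl, hset1]
  -- Second summand
  have hset2 : hatAct vh⁻¹ '' (PhiHatNeg (n₁ * n₂) ∩ hatAct (vh * wh) '' PhiHatNeg (n₁ * n₂)) =
      hatAct wh '' PhiHatNeg (n₁ * n₂) ∩ hatAct vh⁻¹ '' PhiHatNeg (n₁ * n₂) := by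
    rw [Set.image_inter (hatAct_injective vh⁻¹), Set.image_image]
    have hc : ∀ x : Lhat (n₁ * n₂), hatAct vh⁻¹ (hatAct (vh * wh) x) = hatAct wh x := by
      intro x
      rw [← hatAct_mul, inv_mul_cancel_left]
    simp only [hc]
    exact Set.inter_comm _ _
  have e2 : hatAct vh⁻¹
      (∑ᶠ αh ∈ PhiHatNeg (n₁ * n₂) ∩ hatAct (vh * wh) '' PhiHatNeg (n₁ * n₂), αh)
      = ∑ᶠ αh ∈ hatAct wh '' PhiHatNeg (n₁ * n₂) ∩ hatAct vh⁻¹ '' PhiHatNeg (n₁ * n₂), αh := by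
    rw [show (hatAct vh⁻¹ : Lhat (n₁*n₂) → Lhat (n₁*n₂)) = ⇑(hatActHom vh⁻¹) from rfl,
      ← map_finsum_mem_id (hatActHom vh⁻¹) (hHf.inter_of_left _) ((hatAct_injective vh⁻¹).injOn),
      show ⇑(hatActHom vh⁻¹) = (hatAct vh⁻¹ : Lhat (n₁*n₂) → Lhat (n₁*n₂)) from rfl, hset2]
  have hDf : (hatAct wh '' PhiHatNeg (n₁ * n₂) ∩ hatAct vh⁻¹ '' PhiHatNeg (n₁ * n₂)).Finite :=
    (hHf.image _).inter_of_left _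
  have e3 : ρ (∑ᶠ αh ∈ hatAct wh '' PhiHatNeg (n₁ * n₂) ∩ hatAct vh⁻¹ '' PhiHatNeg (n₁ * n₂), αh)
      = ∑ᶠ α ∈ PhiNeg n₁ n₂ ∩ wAct v⁻¹ '' PhiPos n₁ n₂, α := by
    rw [← h.image_eq]
    exact (map_finsum_mem_id ρ.toAddMonoidHom hDf h.injOn).symm
  rw [e1, e2, e3]
  rw [← finsum_mem_union ?disj ((hNf.inter_of_left _)) ((hNf.inter_of_left _))]
  case disj =>
    rw [Set.disjoint_left]
    rintro x ⟨-, y, hy, hxy⟩ ⟨hxN, z, hz, hxz⟩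
    have hyz : y = z := wAct_injective v⁻¹ (hxy.trans hxz.symm)
    exact pos_not_neg hz (hyz ▸ hy)
  have hsetfinal : (PhiNeg n₁ n₂ ∩ wAct v⁻¹ '' PhiNeg n₁ n₂) ∪
      (PhiNeg n₁ n₂ ∩ wAct v⁻¹ '' PhiPos n₁ n₂) = PhiNeg n₁ n₂ := by
    rw [← Set.inter_union_distrib_left]
    apply Set.inter_eq_left.mpr
    intro x hx
    have hr := wAct_root v (Or.inr hx : x ∈ PhiPos n₁ n₂ ∪ PhiNeg n₁ n₂)
    have hxeq : wAct v⁻¹ (wAct v x) = x := wAct_leftInv v x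
    rcases hr with hp | hn
    · exact Or.inr ⟨wAct v x, hp, hxeq⟩
    · exact Or.inl ⟨wAct v x, hn, hxeq⟩
  rw [hsetfinal]
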